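/- Fix t1 with s_max ≤ t1 < e_min and p > t1 - s_min. Then f(t2) = MI(t1,t2,a) has exactly one positive inflection point, at t2 = e_min. -/

import Mathlib

/-- Minimum intersection of an activity (sMin, sMax, p) with interval [t1,t2]. -/
noncomputable def MI (sMin sMax p t1 t2 : ℝ) : ℝ :=
  max 0 (min (min p (t2 - t1)) (min (sMin + p - t1) (t2 - sMax)))

/-- Left derivative. -/
noncomputable def leftD (f : ℝ → ℝ) (x : ℝ) : ℝ := derivWithin f (Set.Iio x) x

/-- Right derivative. -/
noncomputable def rightD (f : ℝ → ℝ) (x : ℝ) : ℝ := derivWithin f (Set.Ioi x) x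

/-! When `s_min ≤ s_max ≤ t1 < e_min`, the terms `p` and `t2 - s_max` of `MI` never realise the
minimum, so `t2 ↦ MI(t1, t2, a)` is the ramp that is `0` up to `t1`, rises with slope `1` and stays
at `e_min - t1` from `e_min` on. Its one-sided derivatives are `0` or `1` away from the two kinks,
and only the upper kink `e_min` has left slope `1` over right slope `0`. -/

open Set

theorem leftD_eq_of_hasDerivWithinAt {f : ℝ → ℝ} {c x : ℝ} (h : HasDerivWithinAt f c (Iic x) x) :
    leftD f x = c :=
  h.Iio_of_Iic.derivWithin (uniqueDiffWithinAt_Iio x)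

theorem rightD_eq_of_hasDerivWithinAt {f : ℝ → ℝ} {c x : ℝ} (h : HasDerivWithinAt f c (Ici x) x) :
    rightD f x = c :=
  h.Ioi_of_Ici.derivWithin (uniqueDiffWithinAt_Ioi x)

noncomputable def ramp (a b t : ℝ) : ℝ := max 0 (min (t - a) (b - a))

section Ramp

variable {a b t : ℝ}

theorem ramp_of_le_left (ht : t ≤ a) : ramp a b t = 0 :=
  max_eq_left ((min_le_left _ _).trans (by linarith))

theorem ramp_of_mem_Icc (hat : a ≤ t) (htb : t ≤ b) : ramp a b t = t - a := by
  rw [ramp, min_eq_left (by linarith), max_eq_right (by linarith)]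

theorem ramp_of_le_right (hab : a ≤ b) (ht : b ≤ t) : ramp a b t = b - a := by
  rw [ramp, min_eq_right (by linarith), max_eq_right (by linarith)]

theorem leftD_ramp (hab : a ≤ b) (x : ℝ) :
    leftD (ramp a b) x = if a < x ∧ x ≤ b then 1 else 0 := by
  apply leftD_eq_of_hasDerivWithinAt
  split_ifs with hx
  · refine (hasDerivWithinAt_inter (Ioi_mem_nhds hx.1)).1 ?_
    exact ((hasDerivWithinAt_id x _).sub_const a).congr_of_mem
      (fun y hy => ramp_of_mem_Icc hy.2.le (hy.1.trans hx.2)) ⟨self_mem_Iic, hx.1⟩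
  · rcases le_or_gt x a with hxa | hax
    · exact (hasDerivWithinAt_const x _ 0).congr_of_mem
        (fun y hy => ramp_of_le_left (hy.trans hxa)) self_mem_Iic
    · have hbx : b < x := lt_of_not_ge fun hxb => hx ⟨hax, hxb⟩
      refine (hasDerivWithinAt_inter (Ioi_mem_nhds hbx)).1 ?_
      exact (hasDerivWithinAt_const x _ (b - a)).congr_of_mem
        (fun y hy => ramp_of_le_right hab hy.2.le) ⟨self_mem_Iic, hbx⟩

theorem rightD_ramp (hab : a ≤ b) (x : ℝ) :
    rightD (ramp a b) x = if a ≤ x ∧ x < b then 1 else 0 := by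
  apply rightD_eq_of_hasDerivWithinAt
  split_ifs with hx
  · refine (hasDerivWithinAt_inter (Iio_mem_nhds hx.2)).1 ?_
    exact ((hasDerivWithinAt_id x _).sub_const a).congr_of_mem
      (fun y hy => ramp_of_mem_Icc (hx.1.trans hy.1) hy.2.le) ⟨self_mem_Ici, hx.2⟩
  · rcases le_or_gt b x with hbx | hxb
    · exact (hasDerivWithinAt_const x _ (b - a)).congr_of_mem
        (fun y hy => ramp_of_le_right hab (hbx.trans hy)) self_mem_Ici
    · have hxa : x < a := lt_of_not_ge fun hax => hx ⟨hax, hxb⟩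
      refine (hasDerivWithinAt_inter (Iio_mem_nhds hxa)).1 ?_
      exact (hasDerivWithinAt_const x _ 0).congr_of_mem
        (fun y hy => ramp_of_le_left hy.2.le) ⟨self_mem_Ici, hxa⟩

theorem rightD_ramp_lt_leftD_ramp_iff (hab : a < b) (x : ℝ) :
    rightD (ramp a b) x < leftD (ramp a b) x ↔ x = b := by
  rw [leftD_ramp hab.le, rightD_ramp hab.le]
  split_ifs <;> norm_num <;> grind

end Ramp

theorem MI_eq_ramp {sMin sMax p t1 t2 : ℝ} (hsMin : sMin ≤ t1) (hsMax : sMax ≤ t1) :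
    MI sMin sMax p t1 t2 = ramp t1 (sMin + p) t2 := by
  rw [MI, ramp]
  congr 1
  apply le_antisymm
  · exact le_min ((min_le_left _ _).trans (min_le_right _ _))
      ((min_le_right _ _).trans (min_le_left _ _))
  · exact le_min (le_min ((min_le_right _ _).trans (by linarith)) (min_le_left _ _))
      (le_min (min_le_right _ _) ((min_le_left _ _).trans (by linarith)))

theorem mi_unique_inflection_case4_general (sMin sMax p t1 : ℝ)
    (hs : sMin ≤ sMax)
    (h1 : sMax ≤ t1) (h2 : t1 < sMin + p) :
    ∀ x : ℝ,
      leftD (fun t2 => MI sMin sMax p t1 t2) x >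
        rightD (fun t2 => MI sMin sMax p t1 t2) x ↔ x = sMin + p := by
  have hMI : (fun t2 => MI sMin sMax p t1 t2) = ramp t1 (sMin + p) :=
    funext fun _ => MI_eq_ramp (hs.trans h1) h1
  rw [hMI]
  exact rightD_ramp_lt_leftD_ramp_iff h2

theorem mi_unique_inflection_case4 (sMin sMax p t1 : ℝ)
    (hs : sMin ≤ sMax) (hp : 0 ≤ p)
    (h1 : sMax ≤ t1) (h2 : t1 < sMin + p) (h3 : p > t1 - sMin) :
    ∀ x : ℝ,
      leftD (fun t2 => MI sMin sMax p t1 t2) x >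
        rightD (fun t2 => MI sMin sMax p t1 t2) x ↔ x = sMin + p :=
  mi_unique_inflection_case4_general sMin sMax p t1 hs h1 h2
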